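/- arXiv:1505.06195 — 2 statements merged into one kernel-verified Lean document; each statement's English description precedes it below -/
import Mathlib

section
/- Let M be a real symmetric positive semidefinite n×n matrix of rank k, in block form M = [[A, Bᵀ],[B, C]] where A is a k×k invertible principal submatrix. Then C = B A⁻¹ Bᵀ; i.e., M is exactly reproduced by the skeleton decomposition through any maximal-rank principal submatrix. -/
open Matrix

theorem skeleton_exact_of_rank {k m : ℕ}
    (A : Matrix (Fin k) (Fin k) ℝ) (B : Matrix (Fin m) (Fin k) ℝ)
    (C : Matrix (Fin m) (Fin m) ℝ)
    (hM : (Matrix.fromBlocks A Bᵀ B C).PosSemidef)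
    (hA : IsUnit A.det)
    (hrank : (Matrix.fromBlocks A Bᵀ B C).rank = k) :
    C = B * A⁻¹ * Bᵀ := by
  set M : Matrix (Fin k ⊕ Fin m) (Fin k ⊕ Fin m) ℝ := Matrix.fromBlocks A Bᵀ B C with hMdef
  -- the linear map sending x : ℝ^k to M *ᵥ (x ⊕ 0)
  have hlin : ∀ (x : Fin k → ℝ), (Sum.elim x (0 : Fin m → ℝ)) =
      fun i => Sum.elim x (0 : Fin m → ℝ) i := fun _ => rfl
  let L : (Fin k → ℝ) →ₗ[ℝ] (Fin k ⊕ Fin m → ℝ) :=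
    { toFun := fun x => M *ᵥ Sum.elim x 0
      map_add' := by
        intro x y
        have : (Sum.elim (x + y) (0 : Fin m → ℝ)) =
            Sum.elim x 0 + Sum.elim y 0 := by
          funext i; cases i <;> simp
        rw [this, mulVec_add]
      map_smul' := by
        intro c x
        have : (Sum.elim (c • x) (0 : Fin m → ℝ)) = c • Sum.elim x 0 := by
          funext i; cases i <;> simp
        rw [this, mulVec_smul]; rfl }
  have hLval : ∀ x, L x = Sum.elim (A *ᵥ x) (B *ᵥ x) := by
    intro x
    show M *ᵥ Sum.elim x 0 = _
    rw [hMdef, fromBlocks_mulVec]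
    simp
  have hLinj : Function.Injective L := by
    rw [injective_iff_map_eq_zero]
    intro x hx
    rw [hLval] at hx
    have hAx : A *ᵥ x = 0 := by
      funext i
      have := congrFun hx (Sum.inl i)
      simpa using this
    have : A⁻¹ *ᵥ (A *ᵥ x) = x := by
      rw [mulVec_mulVec, Matrix.nonsing_inv_mul A hA, one_mulVec]
    rw [hAx, mulVec_zero] at this
    exact this.symm
  have hfr : Module.finrank ℝ (LinearMap.range L) = k := by
    rw [LinearMap.finrank_range_of_inj hLinj]
    simp
  have hle : LinearMap.range L ≤ LinearMap.range M.mulVecLin := by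
    rintro y ⟨x, rfl⟩
    exact ⟨Sum.elim x 0, rfl⟩
  have hfr' : Module.finrank ℝ (LinearMap.range M.mulVecLin) = k := hrank
  have heq : LinearMap.range L = LinearMap.range M.mulVecLin :=
    Submodule.eq_of_le_of_finrank_eq hle (by rw [hfr, hfr'])
  -- now every column of (Bᵀ; C) is in the range of L
  have key : ∀ x : Fin m → ℝ, C *ᵥ x = (B * A⁻¹ * Bᵀ) *ᵥ x := by
    intro x
    have hmem : M *ᵥ Sum.elim 0 x ∈ LinearMap.range L := by
      rw [heq]; exact ⟨Sum.elim 0 x, rfl⟩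
    obtain ⟨y, hy⟩ := hmem
    rw [hLval] at hy
    have hrhs : M *ᵥ Sum.elim (0 : Fin k → ℝ) x = Sum.elim (Bᵀ *ᵥ x) (C *ᵥ x) := by
      rw [hMdef, fromBlocks_mulVec]; simp
    rw [hrhs] at hy
    have h1 : A *ᵥ y = Bᵀ *ᵥ x := by
      funext i; have := congrFun hy (Sum.inl i); simpa using this
    have h2 : B *ᵥ y = C *ᵥ x := by
      funext i; have := congrFun hy (Sum.inr i); simpa using this
    have hy' : y = A⁻¹ *ᵥ (Bᵀ *ᵥ x) := by
      rw [← h1, mulVec_mulVec, Matrix.nonsing_inv_mul A hA, one_mulVec]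
    rw [← h2, hy', mulVec_mulVec, mulVec_mulVec]
  ext i j
  have := congrFun (key (Pi.single j 1)) i
  simpa using this
end

section
/- Let M be a real symmetric positive semidefinite n×n matrix with strictly positive diagonal pivot p = M[k,k], and let R = M - (1/p)M[:,k]M[:,k]ᵀ. Then for every index set S ⊆ {1,…,n}, the principal minor det(R[S,S]) is nonnegative; moreover if k ∈ S then det(R[S,S]) = 0. -/
/-!
With `p = M k k`, `v = M[:, k]` and `P = 1 - p⁻¹ • e_k vᵀ`, symmetry of `M` gives `R = Pᵀ M P`,
so `R` is positive semidefinite and so are all its principal submatrices, whose determinants are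
therefore nonnegative. Moreover the `k`-th column of `R` is `v - p⁻¹ • v p = 0`, so every principal
minor containing `k` vanishes.
-/

open Matrix

namespace Matrix

variable {ι : Type*}

noncomputable def deflation (M : Matrix ι ι ℝ) (k : ι) : Matrix ι ι ℝ :=
  M - (M k k)⁻¹ • vecMulVec (fun i => M i k) (fun i => M i k)

theorem deflation_apply_self_right {M : Matrix ι ι ℝ} {k : ι} (hk : M k k ≠ 0) (i : ι) :
    M.deflation k i k = 0 := by
  simp only [deflation, sub_apply, smul_apply, vecMulVec_apply, smul_eq_mul]
  rw [mul_comm (M i k), inv_mul_cancel_left₀ hk, sub_self]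

variable [Fintype ι] [DecidableEq ι]

noncomputable def deflationProjector (M : Matrix ι ι ℝ) (k : ι) : Matrix ι ι ℝ :=
  1 - (M k k)⁻¹ • vecMulVec (Pi.single k 1) (fun i => M i k)

theorem mul_deflationProjector (M : Matrix ι ι ℝ) (k : ι) :
    M * M.deflationProjector k = M.deflation k := by
  simp only [deflationProjector, deflation, mul_sub, mul_one, Matrix.mul_smul, mul_vecMulVec,
    mulVec_single_one]
  rfl

theorem IsSymm.deflation_eq_transpose_mul_mul {M : Matrix ι ι ℝ} (hM : M.IsSymm) (k : ι) :
    M.deflation k = (M.deflationProjector k)ᵀ * M * M.deflationProjector k := by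
  have hrow : Pi.single k 1 ᵥ* M = fun i => M i k := by
    rw [single_one_vecMul]
    funext i
    exact hM.apply i k
  have hpivot : Pi.single k 1 ⬝ᵥ (fun i => M i k) = M k k := by simp
  -- also true for `p = 0`, since `0⁻¹ = 0`
  have hscalar : (M k k)⁻¹ * ((M k k)⁻¹ * M k k) = (M k k)⁻¹ := by
    rcases eq_or_ne (M k k) 0 with h | h
    · simp [h]
    · rw [inv_mul_cancel₀ h, mul_one]
  rw [Matrix.mul_assoc, mul_deflationProjector]
  simp only [deflation, deflationProjector, transpose_sub, transpose_one, transpose_smul,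
    transpose_vecMulVec, sub_mul, one_mul, Matrix.smul_mul, vecMulVec_mul, vecMul_sub, hrow,
    vecMul_smul, vecMul_vecMulVec, hpivot, vecMulVec_sub, vecMulVec_smul, smul_sub, smul_smul,
    hscalar]
  abel

theorem PosSemidef.deflation {M : Matrix ι ι ℝ} (hM : M.PosSemidef) (k : ι) :
    (M.deflation k).PosSemidef := by
  rw [(isHermitian_iff_isSymm.mp hM.isHermitian).deflation_eq_transpose_mul_mul k,
    ← conjTranspose_eq_transpose_of_trivial]
  exact hM.conjTranspose_mul_mul_same _

end Matrix

theorem deflation_principal_minors {n : ℕ} (M : Matrix (Fin n) (Fin n) ℝ)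
    (hM : M.PosSemidef) (k : Fin n) (hp : 0 < M k k) :
    ∀ S : Finset (Fin n),
      0 ≤ ((M - (M k k)⁻¹ • vecMulVec (fun i => M i k) (fun i => M i k)).submatrix
            (fun i : S => (i : Fin n)) (fun j : S => (j : Fin n))).det ∧
      (k ∈ S →
        ((M - (M k k)⁻¹ • vecMulVec (fun i => M i k) (fun i => M i k)).submatrix
            (fun i : S => (i : Fin n)) (fun j : S => (j : Fin n))).det = 0) := by
  intro S
  exact ⟨((hM.deflation k).submatrix _).det_nonneg, fun hkS =>
    det_eq_zero_of_column_eq_zero ⟨k, hkS⟩ fun i => deflation_apply_self_right hp.ne' i⟩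
end
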